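/- If X coarsely embeds in a large scale weakly paracompact metric space Y, then X is large scale weakly paracompact. -/

import Mathlib

/-!
Pull a cover `V` of `Y` back along `f`, replacing each `B ∈ V` by the set of points `x` such that
the unit ball around `f x` lies in `B`. The upper control `ρ₂` turns a Lebesgue number
`ρ₂ s + 1` of `V` into a Lebesgue number `s` of the pulled-back cover, and the lower control `ρ₁`
keeps it uniformly bounded. Shrinking by a unit ball rather than taking plain preimages is what
makes local finiteness pass back: if `ball x r` lies in the pullback of `B`, then
`ball (f x) 1 ⊆ B`, and only finitely many `B ∈ V` contain that ball.
-/

open Filter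

/-- A family of subsets covers `X`. -/
def IsCover {X : Type*} (U : Set (Set X)) : Prop := ∀ x : X, ∃ A ∈ U, x ∈ A

/-- A family of subsets of a metric space is uniformly bounded. -/
def UniformlyBounded {X : Type*} [MetricSpace X] (U : Set (Set X)) : Prop :=
  ∃ M : ℝ, ∀ A ∈ U, ∀ x ∈ A, ∀ y ∈ A, dist x y ≤ M

/-- `X` is large scale weakly paracompact. -/
def LSWeaklyParacompact (X : Type*) [MetricSpace X] : Prop :=
  ∀ r s : ℝ, 0 < r → 0 < s → ∃ U : Set (Set X), IsCover U ∧ UniformlyBounded U ∧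
    (∀ x : X, ∃ A ∈ U, Metric.ball x s ⊆ A) ∧
    ∀ x : X, {A ∈ U | Metric.ball x r ⊆ A}.Finite

/-- `f : X → Y` is a coarse embedding: there are non-decreasing unbounded
`ρ₁, ρ₂ : [0,∞) → [0,∞)` with `ρ₁(d(x,y)) ≤ d(f x, f y) ≤ ρ₂(d(x,y))`. -/
def CoarseEmbedding {X Y : Type*} [MetricSpace X] [MetricSpace Y] (f : X → Y) : Prop :=
  ∃ ρ₁ ρ₂ : ℝ → ℝ, Monotone ρ₁ ∧ Monotone ρ₂ ∧
    Tendsto ρ₁ atTop atTop ∧ Tendsto ρ₂ atTop atTop ∧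
    ∀ x y : X, ρ₁ (dist x y) ≤ dist (f x) (f y) ∧ dist (f x) (f y) ≤ ρ₂ (dist x y)

open Metric

section

variable {X Y : Type*} [MetricSpace Y]

def deepPreimage (f : X → Y) (t : ℝ) (B : Set Y) : Set X := {x | ball (f x) t ⊆ B}

lemma deepPreimage_subset_preimage (f : X → Y) {t : ℝ} (ht : 0 < t) (B : Set Y) :
    deepPreimage f t B ⊆ f ⁻¹' B :=
  fun _ hx => hx (mem_ball_self ht)

variable [MetricSpace X]

lemma isCover_of_forall_ball_subset {U : Set (Set X)} {s : ℝ} (hs : 0 < s)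
    (hU : ∀ x : X, ∃ A ∈ U, ball x s ⊆ A) : IsCover U := fun x =>
  let ⟨A, hA, hxA⟩ := hU x
  ⟨A, hA, hxA (mem_ball_self hs)⟩

lemma UniformlyBounded.of_forall_subset {U V : Set (Set X)} (hV : UniformlyBounded V)
    (hUV : ∀ A ∈ U, ∃ B ∈ V, A ⊆ B) : UniformlyBounded U := by
  obtain ⟨M, hM⟩ := hV
  refine ⟨M, fun A hA x hx y hy => ?_⟩
  obtain ⟨B, hB, hAB⟩ := hUV A hA
  exact hM B hB x (hAB hx) y (hAB hy)

lemma UniformlyBounded.image_preimage {f : X → Y} {ρ₁ : ℝ → ℝ} (hρ₁ : Tendsto ρ₁ atTop atTop)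
    (hf : ∀ x y : X, ρ₁ (dist x y) ≤ dist (f x) (f y)) {V : Set (Set Y)}
    (hV : UniformlyBounded V) : UniformlyBounded ((f ⁻¹' ·) '' V) := by
  obtain ⟨M, hM⟩ := hV
  obtain ⟨D, hD⟩ := eventually_atTop.mp (hρ₁.eventually_gt_atTop M)
  refine ⟨D, ?_⟩
  rintro _ ⟨B, hB, rfl⟩ x hx y hy
  by_contra! hDxy
  linarith [hD _ hDxy.le, hf x y, hM B hB _ hx _ hy]

lemma ball_subset_deepPreimage {f : X → Y} {ρ₂ : ℝ → ℝ} (hρ₂ : Monotone ρ₂)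
    (hf : ∀ x y : X, dist (f x) (f y) ≤ ρ₂ (dist x y)) {x : X} {s t : ℝ} {B : Set Y}
    (hB : ball (f x) (ρ₂ s + t) ⊆ B) : ball x s ⊆ deepPreimage f t B := by
  intro y hy z hz
  apply hB
  rw [mem_ball] at hy hz ⊢
  calc dist z (f x) ≤ dist z (f y) + dist (f y) (f x) := dist_triangle _ _ _
    _ < t + ρ₂ s := add_lt_add_of_lt_of_le hz ((hf y x).trans (hρ₂ hy.le))
    _ = ρ₂ s + t := add_comm _ _

lemma finite_deepPreimage_image_ball_subset (f : X → Y) {t r : ℝ} (hr : 0 < r)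
    {V : Set (Set Y)} (x : X) (hV : {B ∈ V | ball (f x) t ⊆ B}.Finite) :
    {A ∈ deepPreimage f t '' V | ball x r ⊆ A}.Finite := by
  refine (hV.image (deepPreimage f t)).subset ?_
  rintro _ ⟨⟨B, hB, rfl⟩, hxB⟩
  exact ⟨B, ⟨hB, hxB (mem_ball_self hr)⟩, rfl⟩

end

theorem stmt_10 {X Y : Type*} [MetricSpace X] [MetricSpace Y] (f : X → Y)
    (hf : CoarseEmbedding f) (hY : LSWeaklyParacompact Y) :
    LSWeaklyParacompact X := by
  obtain ⟨ρ₁, ρ₂, -, hρ₂, hρ₁, -, hρ⟩ := hf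
  intro r s hr hs
  obtain ⟨V, -, hVbdd, hVball, hVfin⟩ := hY 1 (max (ρ₂ s + 1) 1) one_pos (by positivity)
  have hball : ∀ x : X, ∃ A ∈ deepPreimage f 1 '' V, ball x s ⊆ A := fun x =>
    let ⟨B, hB, hxB⟩ := hVball (f x)
    ⟨_, ⟨B, hB, rfl⟩,
      ball_subset_deepPreimage hρ₂ (fun x y => (hρ x y).2)
        ((ball_subset_ball (le_max_left _ _)).trans hxB)⟩
  refine ⟨deepPreimage f 1 '' V, isCover_of_forall_ball_subset hs hball, ?_, hball,
    fun x => finite_deepPreimage_image_ball_subset f hr x (hVfin (f x))⟩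
  refine (hVbdd.image_preimage hρ₁ fun x y => (hρ x y).1).of_forall_subset ?_
  rintro _ ⟨B, hB, rfl⟩
  exact ⟨f ⁻¹' B, ⟨B, hB, rfl⟩, deepPreimage_subset_preimage f one_pos B⟩
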